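/- arXiv:1405.4712 — 2 statements merged into one kernel-verified Lean document; each statement's English description precedes it below -/
import Mathlib

section
/- Let -1 < ν < -1/2 and define λ_ν(x) = ∑_{n≥0} (2n+1) x^{2n} / (4^n · n! · (ν+1)_n). Then λ_ν(x) > cosh x + x·sinh x for all x > 0. -/
noncomputable def lam (ν x : ℝ) : ℝ :=
  ∑' n : ℕ, (2 * (n : ℝ) + 1) * x ^ (2 * n) /
    ((4 : ℝ) ^ n * (n.factorial : ℝ) * (ascPochhammer ℝ n).eval (ν + 1))

/-!
For `0 < c ≤ 1/2` the Pochhammer symbol is monotone, `(c)_n ≤ (1/2)_n`, and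
`4^n n! (1/2)_n = (2n)!`. Hence with `c = ν + 1` every term of `λ_ν(x)` is at least
`(2n+1) x^{2n} / (2n)!`, strictly so at `n = 1` when `c < 1/2`, and these lower bounds sum to
`cosh x + x sinh x`.
-/

open Nat Real

section Pochhammer

variable {S : Type*} [CommSemiring S] [PartialOrder S] [IsOrderedRing S]

theorem pow_le_ascPochhammer_eval (n : ℕ) {a : S} (ha : 0 ≤ a) :
    a ^ n ≤ (ascPochhammer S n).eval a := by
  induction n with
  | zero => simp
  | succ n ih =>
    rw [ascPochhammer_succ_eval, pow_succ]
    exact mul_le_mul ih (le_add_of_nonneg_right n.cast_nonneg) ha ((pow_nonneg ha n).trans ih)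

theorem ascPochhammer_eval_le_eval (n : ℕ) {a b : S} (ha : 0 ≤ a) (hab : a ≤ b) :
    (ascPochhammer S n).eval a ≤ (ascPochhammer S n).eval b := by
  induction n with
  | zero => simp
  | succ n ih =>
    rw [ascPochhammer_succ_eval, ascPochhammer_succ_eval]
    exact mul_le_mul ih (add_le_add_left hab _) (add_nonneg ha n.cast_nonneg)
      ((pow_nonneg (ha.trans hab) n).trans (pow_le_ascPochhammer_eval n (ha.trans hab)))

end Pochhammer

theorem four_pow_mul_factorial_mul_ascPochhammer_eval_half {K : Type*} [Field K] [CharZero K]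
    (n : ℕ) : (4 : K) ^ n * n ! * (ascPochhammer K n).eval (1 / 2) = (2 * n)! := by
  induction n with
  | zero => simp
  | succ n ih =>
    rw [show 2 * (n + 1) = 2 * n + 1 + 1 by ring, ascPochhammer_succ_eval, pow_succ,
      factorial_succ, factorial_succ, factorial_succ]
    push_cast
    linear_combination (4 * ((n : K) + 1) * (1 / 2 + n)) * ih

theorem hasSum_cosh_add_mul_sinh (x : ℝ) :
    HasSum (fun n : ℕ => (2 * (n : ℝ) + 1) * x ^ (2 * n) / (2 * n)!)
      (cosh x + x * sinh x) := by
  have hsucc (n : ℕ) : 2 * ((n + 1 : ℕ) : ℝ) * x ^ (2 * (n + 1)) / (2 * (n + 1))! =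
      x * (x ^ (2 * n + 1) / (2 * n + 1)!) := by
    rw [show 2 * (n + 1) = 2 * n + 1 + 1 by ring, factorial_succ, pow_succ]
    push_cast
    field_simp
    ring
  have hshift : HasSum (fun n : ℕ => 2 * (n : ℝ) * x ^ (2 * n) / (2 * n)!) (x * sinh x) := by
    rw [← hasSum_nat_add_iff' 1]
    simpa only [hsucc, Finset.sum_range_one, CharP.cast_eq_zero, mul_zero, zero_mul, zero_div,
      sub_zero] using (hasSum_sinh x).mul_left x
  simpa only [add_mul, one_mul, add_div, add_comm] using (hasSum_cosh x).add hshift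

noncomputable def diniTerm (c x : ℝ) (n : ℕ) : ℝ :=
  (2 * (n : ℝ) + 1) * x ^ (2 * n) / (4 ^ n * n ! * (ascPochhammer ℝ n).eval c)

theorem lam_eq_tsum_diniTerm (ν x : ℝ) : lam ν x = ∑' n, diniTerm (ν + 1) x n := rfl

theorem diniTerm_half (x : ℝ) (n : ℕ) :
    diniTerm (1 / 2) x n = (2 * (n : ℝ) + 1) * x ^ (2 * n) / (2 * n)! := by
  rw [diniTerm, four_pow_mul_factorial_mul_ascPochhammer_eval_half]

theorem diniTerm_one (c x : ℝ) : diniTerm c x 1 = 3 * x ^ 2 / (4 * c) := by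
  norm_num [diniTerm]

theorem diniTerm_antitone (x : ℝ) (n : ℕ) {c d : ℝ} (hc : 0 < c) (hcd : c ≤ d) :
    diniTerm d x n ≤ diniTerm c x n := by
  have := ascPochhammer_pos n c hc
  rw [diniTerm, diniTerm, pow_mul]
  gcongr
  exact ascPochhammer_eval_le_eval n hc.le hcd

theorem diniTerm_nonneg (x : ℝ) (n : ℕ) {c : ℝ} (hc : 0 < c) : 0 ≤ diniTerm c x n := by
  have := ascPochhammer_pos n c hc
  rw [diniTerm, pow_mul]
  positivity

theorem summable_diniTerm (x : ℝ) {c : ℝ} (hc : 0 < c) : Summable (diniTerm c x) := by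
  refine (summable_pow_div_factorial (3 * x ^ 2 / c)).of_nonneg_of_le
    (fun n => diniTerm_nonneg x n hc) (fun n => ?_)
  have hodd : 2 * (n : ℝ) + 1 ≤ 3 ^ n := by
    have := one_add_mul_le_pow (show (-2 : ℝ) ≤ 2 by norm_num) n
    norm_num at this
    linarith
  have hden : c ^ n * n ! ≤ 4 ^ n * n ! * (ascPochhammer ℝ n).eval c :=
    calc c ^ n * n ! = 1 * n ! * c ^ n := by ring
      _ ≤ 4 ^ n * n ! * (ascPochhammer ℝ n).eval c := by
        gcongr
        · exact one_le_pow₀ (by norm_num)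
        · exact pow_le_ascPochhammer_eval n hc.le
  rw [diniTerm, pow_mul, div_pow, mul_pow, div_div]
  exact div_le_div₀ (by positivity) (by gcongr) (by positivity) hden

theorem stmt_4 (ν : ℝ) (hν₁ : -1 < ν) (hν₂ : ν < -(1/2)) (x : ℝ) (hx : 0 < x) :
    lam ν x > Real.cosh x + x * Real.sinh x := by
  have hc : 0 < ν + 1 := by linarith
  have hc' : ν + 1 < 1 / 2 := by linarith
  have hhalf : HasSum (diniTerm (1 / 2) x) (cosh x + x * sinh x) := by
    simpa only [← diniTerm_half] using hasSum_cosh_add_mul_sinh x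
  rw [lam_eq_tsum_diniTerm]
  refine hasSum_lt (i := 1) (fun n => diniTerm_antitone x n hc hc'.le) ?_ hhalf
    (summable_diniTerm x hc).hasSum
  rw [diniTerm_one, diniTerm_one]
  gcongr
end

section
/- For each fixed x ∈ ℝ, the function ν ↦ λ_ν(x) = ∑_{n≥0} (2n+1) x^{2n} / (4^n · n! · (ν+1)_n) is log-convex on (-1, ∞), i.e., for ν₁, ν₂ > -1 and α ∈ [0,1], λ_{αν₁+(1-α)ν₂}(x) ≤ λ_{ν₁}(x)^α · λ_{ν₂}(x)^{1-α}. -/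
/-!
Each term of the series is a nonnegative coefficient divided by `(ν+1)_n = ∏_{k<n} (ν+1+k)`.
Weighted AM-GM on every factor makes the Pochhammer symbol log-concave in `ν`, so each term is
log-convex in `ν`, and Hölder's inequality with exponents `1/α`, `1/(1-α)` carries log-convexity
over to the sum. Summability comes from `(s)_n ≥ min(s,1)^n n!`, which dominates the series by an
exponential series.
-/

open Real

-- Hölder's inequality with exponents `1/α` and `1/(1-α)`.
theorem summable_and_tsum_rpow_mul_rpow_le {ι : Type*} {f g : ι → ℝ} {α : ℝ}
    (hα₀ : 0 < α) (hα₁ : α < 1) (hf : ∀ i, 0 ≤ f i) (hg : ∀ i, 0 ≤ g i)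
    (hf_sum : Summable f) (hg_sum : Summable g) :
    (Summable fun i => f i ^ α * g i ^ (1 - α)) ∧
      ∑' i, f i ^ α * g i ^ (1 - α) ≤ (∑' i, f i) ^ α * (∑' i, g i) ^ (1 - α) := by
  have hβ : 0 < 1 - α := sub_pos.mpr hα₁
  have hpq : (1 / α).HolderConjugate (1 / (1 - α)) := by
    rw [Real.holderConjugate_iff]
    exact ⟨one_lt_one_div hα₀ hα₁, by simp⟩
  have hroot : ∀ {a t : ℝ}, 0 < a → 0 ≤ t → (t ^ a) ^ (1 / a) = t := fun ha ht => by
    rw [← rpow_mul ht, mul_one_div_cancel ha.ne', rpow_one]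
  have hf' : ∀ i, (f i ^ α) ^ (1 / α) = f i := fun i => hroot hα₀ (hf i)
  have hg' : ∀ i, (g i ^ (1 - α)) ^ (1 / (1 - α)) = g i := fun i => hroot hβ (hg i)
  have hholder := summable_and_inner_le_Lp_mul_Lq_tsum_of_nonneg hpq
    (fun i => rpow_nonneg (hf i) α) (fun i => rpow_nonneg (hg i) (1 - α))
    (by simpa only [hf'] using hf_sum) (by simpa only [hg'] using hg_sum)
  simpa only [hf', hg', one_div_one_div] using hholder

theorem ascPochhammer_eval_rpow_mul_rpow_le {a b α : ℝ} (ha : 0 < a) (hb : 0 < b)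
    (hα₀ : 0 ≤ α) (hα₁ : α ≤ 1) (n : ℕ) :
    (ascPochhammer ℝ n).eval a ^ α * (ascPochhammer ℝ n).eval b ^ (1 - α) ≤
      (ascPochhammer ℝ n).eval (α * a + (1 - α) * b) := by
  have hmix : 0 < α * a + (1 - α) * b :=
    (by positivity : 0 < a ^ α * b ^ (1 - α)).trans_le <|
      geom_mean_le_arith_mean2_weighted hα₀ (sub_nonneg.mpr hα₁) ha.le hb.le (by ring)
  induction n with
  | zero => simp
  | succ n ih =>
    have hamgm : (a + n) ^ α * (b + n) ^ (1 - α) ≤ α * a + (1 - α) * b + n := by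
      calc (a + n) ^ α * (b + n) ^ (1 - α) ≤ α * (a + n) + (1 - α) * (b + n) :=
            geom_mean_le_arith_mean2_weighted hα₀ (sub_nonneg.mpr hα₁) (by positivity)
              (by positivity) (by ring)
        _ = α * a + (1 - α) * b + n := by ring
    simp only [ascPochhammer_succ_eval]
    rw [mul_rpow (ascPochhammer_pos n a ha).le (by positivity),
      mul_rpow (ascPochhammer_pos n b hb).le (by positivity), mul_mul_mul_comm]
    exact mul_le_mul ih hamgm (by positivity) (ascPochhammer_pos n _ hmix).le

theorem pow_mul_factorial_le_ascPochhammer_eval {t : ℝ} (ht : 0 ≤ t) (n : ℕ) :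
    min t 1 ^ n * n.factorial ≤ (ascPochhammer ℝ n).eval t := by
  induction n with
  | zero => simp
  | succ n ih =>
    have hk : (0 : ℝ) ≤ n := n.cast_nonneg
    have hstep : min t 1 * (n + 1) ≤ t + n := by
      rcases le_total t 1 with h | h
      · rw [min_eq_left h]; nlinarith
      · rw [min_eq_right h]; linarith
    rw [ascPochhammer_succ_eval, Nat.factorial_succ, Nat.cast_mul, pow_succ, Nat.cast_succ]
    calc min t 1 ^ n * min t 1 * ((n + 1) * n.factorial)
        = min t 1 ^ n * n.factorial * (min t 1 * (n + 1)) := by ring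
      _ ≤ (ascPochhammer ℝ n).eval t * (t + n) :=
        mul_le_mul ih hstep (by positivity) (ih.trans' (by positivity))

theorem div_le_rpow_mul_rpow {c p q m α : ℝ} (hc : 0 ≤ c) (hp : 0 < p) (hq : 0 < q)
    (hm : p ^ α * q ^ (1 - α) ≤ m) :
    c / m ≤ (c / p) ^ α * (c / q) ^ (1 - α) := by
  rw [div_rpow hc hp.le, div_rpow hc hq.le, div_mul_div_comm,
    ← rpow_add' hc (by norm_num : α + (1 - α) ≠ 0), add_sub_cancel, rpow_one]
  gcongr

theorem tsum_div_ascPochhammer_eval_le {c : ℕ → ℝ} (hc : ∀ n, 0 ≤ c n) {s₁ s₂ α : ℝ}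
    (hs₁ : 0 < s₁) (hs₂ : 0 < s₂) (hα₀ : 0 < α) (hα₁ : α < 1)
    (hsum₁ : Summable fun n => c n / (ascPochhammer ℝ n).eval s₁)
    (hsum₂ : Summable fun n => c n / (ascPochhammer ℝ n).eval s₂) :
    ∑' n, c n / (ascPochhammer ℝ n).eval (α * s₁ + (1 - α) * s₂) ≤
      (∑' n, c n / (ascPochhammer ℝ n).eval s₁) ^ α *
        (∑' n, c n / (ascPochhammer ℝ n).eval s₂) ^ (1 - α) := by
  have hP : ∀ {s}, 0 < s → ∀ n, 0 < (ascPochhammer ℝ n).eval s :=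
    fun hs n => ascPochhammer_pos n _ hs
  have hterm : ∀ n, c n / (ascPochhammer ℝ n).eval (α * s₁ + (1 - α) * s₂) ≤
      (c n / (ascPochhammer ℝ n).eval s₁) ^ α * (c n / (ascPochhammer ℝ n).eval s₂) ^ (1 - α) :=
    fun n => div_le_rpow_mul_rpow (hc n) (hP hs₁ n) (hP hs₂ n)
      (ascPochhammer_eval_rpow_mul_rpow_le hs₁ hs₂ hα₀.le hα₁.le n)
  obtain ⟨hsum, hholder⟩ := summable_and_tsum_rpow_mul_rpow_le hα₀ hα₁
    (fun n => div_nonneg (hc n) (hP hs₁ n).le) (fun n => div_nonneg (hc n) (hP hs₂ n).le)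
    hsum₁ hsum₂
  have hmix : 0 < α * s₁ + (1 - α) * s₂ :=
    add_pos (mul_pos hα₀ hs₁) (mul_pos (sub_pos.mpr hα₁) hs₂)
  exact (Summable.tsum_le_tsum hterm
    (hsum.of_nonneg_of_le (fun n => div_nonneg (hc n) (hP hmix n).le) hterm) hsum).trans hholder

noncomputable def lamCoeff (x : ℝ) (n : ℕ) : ℝ :=
  (2 * (n : ℝ) + 1) * x ^ (2 * n) / ((4 : ℝ) ^ n * n.factorial)

theorem lam_eq_tsum (ν x : ℝ) :
    lam ν x = ∑' n, lamCoeff x n / (ascPochhammer ℝ n).eval (ν + 1) := by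
  simp only [lam, lamCoeff, div_mul_eq_div_div]

theorem lamCoeff_nonneg (x : ℝ) (n : ℕ) : 0 ≤ lamCoeff x n := by
  rw [lamCoeff, pow_mul]
  positivity

theorem lamCoeff_le (x : ℝ) (n : ℕ) : lamCoeff x n ≤ (3 * x ^ 2 / 4) ^ n / n.factorial := by
  have h3 : 2 * (n : ℝ) + 1 ≤ 3 ^ n := by
    have := one_add_mul_le_pow (by norm_num : (-2 : ℝ) ≤ 2) n
    norm_num at this
    linarith
  calc lamCoeff x n ≤ 3 ^ n * (x ^ 2) ^ n / (4 ^ n * n.factorial) := by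
        unfold lamCoeff
        rw [pow_mul]
        gcongr
    _ = (3 * x ^ 2 / 4) ^ n / n.factorial := by
        rw [div_pow, mul_pow, div_div]

theorem summable_lamCoeff_div (x : ℝ) {s : ℝ} (hs : 0 < s) :
    Summable fun n => lamCoeff x n / (ascPochhammer ℝ n).eval s := by
  set m := min s 1
  have hm : 0 < m := lt_min hs one_pos
  refine Summable.of_nonneg_of_le
    (fun n => div_nonneg (lamCoeff_nonneg x n) (ascPochhammer_pos n s hs).le) (fun n => ?_)
    (summable_pow_div_factorial (3 * x ^ 2 / 4 / m))
  have hpow : m ^ n ≤ (ascPochhammer ℝ n).eval s :=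
    (le_mul_of_one_le_right (by positivity) (by exact_mod_cast n.factorial_pos)).trans
      (pow_mul_factorial_le_ascPochhammer_eval hs.le n)
  calc lamCoeff x n / (ascPochhammer ℝ n).eval s ≤ lamCoeff x n / m ^ n :=
        div_le_div_of_nonneg_left (lamCoeff_nonneg x n) (by positivity) hpow
    _ ≤ (3 * x ^ 2 / 4) ^ n / n.factorial / m ^ n := by gcongr; exact lamCoeff_le x n
    _ = (3 * x ^ 2 / 4 / m) ^ n / n.factorial := by rw [div_right_comm, ← div_pow]

theorem stmt_10 (x ν₁ ν₂ α : ℝ) (h₁ : -1 < ν₁) (h₂ : -1 < ν₂)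
    (hα₀ : 0 ≤ α) (hα₁ : α ≤ 1) :
    lam (α * ν₁ + (1 - α) * ν₂) x ≤ (lam ν₁ x) ^ α * (lam ν₂ x) ^ (1 - α) := by
  rcases hα₀.eq_or_lt with rfl | hα₀
  · simp
  rcases hα₁.eq_or_lt with rfl | hα₁
  · simp
  have hs₁ : 0 < ν₁ + 1 := by linarith
  have hs₂ : 0 < ν₂ + 1 := by linarith
  have hshift : α * ν₁ + (1 - α) * ν₂ + 1 = α * (ν₁ + 1) + (1 - α) * (ν₂ + 1) := by ring
  simp only [lam_eq_tsum, hshift]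
  exact tsum_div_ascPochhammer_eval_le (lamCoeff_nonneg x) hs₁ hs₂ hα₀ hα₁
    (summable_lamCoeff_div x hs₁) (summable_lamCoeff_div x hs₂)
end
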